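/- Let Γ be a graph and let f : C → Γ be a cycle. Then f is an isometric embedding if and only if d_Γ(f(p), f(q)) ≥ |C|/2 for every antipodal pair of points p, q ∈ C. -/
import Mathlib


open scoped Classical

noncomputable section

namespace ShortcutGraphs

/-- Path metric on (the geometric realization of) the cycle graph `C` with `n` edges:
points of `C` are parametrized by `ℝ` modulo `n`, with each edge isometric to `[0,1]`. -/
def cdist (n : ℕ) (p q : ℝ) : ℝ := ⨅ k : ℤ, |p - q + k * (n : ℝ)|

variable {V : Type*}

/-- A cycle of length `n` in the simplicial graph `G`: a nondegenerate combinatorial map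
from the cycle graph with `n` edges, recorded by the images of its vertices `0, 1, …, n-1`
(indexed by `ZMod n`); consecutive vertices map to adjacent vertices of `G`. -/
def IsCycle (G : SimpleGraph V) (n : ℕ) (c : ZMod n → V) : Prop :=
  ∀ i : ZMod n, G.Adj (c i) (c (i + 1))

/-- Distance, in the geometric realization of the graph `G` (each edge isometric to `[0,1]`,
equipped with the path metric), between the images under the cycle `c` of the points of the
cycle graph parametrized by `p` and `q`.  The point parametrized by `p` lies on the edge of
the cycle joining vertex `⌊p⌋` to vertex `⌊p⌋ + 1`, at distance `p - ⌊p⌋` from the former; a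
geodesic between two points of a graph either stays within one closed edge (the `if` terms)
or consists of a piece of an edge, a geodesic between two vertices, and a piece of an edge
(the `route` term). -/
def rdist (G : SimpleGraph V) (n : ℕ) (c : ZMod n → V) (p q : ℝ) : ℝ :=
  let i : ZMod n := ((⌊p⌋ : ℤ) : ZMod n)
  let j : ZMod n := ((⌊q⌋ : ℤ) : ZMod n)
  let s : ℝ := Int.fract p
  let t : ℝ := Int.fract q
  let a : V := c i
  let b : V := c (i + 1)
  let u : V := c j
  let v : V := c (j + 1)
  let route : ℝ :=
    min (min (s + (G.dist a u : ℝ) + t) (s + (G.dist a v : ℝ) + (1 - t)))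
        (min ((1 - s) + (G.dist b u : ℝ) + t) ((1 - s) + (G.dist b v : ℝ) + (1 - t)))
  min route
    (min (if a = u ∧ b = v then |s - t| else route)
         (if a = v ∧ b = u then |s + t - 1| else route))

/-- Two points of the cycle graph with `n` edges are antipodal if their distance is `n/2`. -/
def Antipodal (n : ℕ) (p q : ℝ) : Prop := cdist n p q = (n : ℝ) / 2

/-- The cycle `c` is isometric: it is an isometric embedding at the level of all points of
the geometric realizations. -/
def IsIsometricCycle (G : SimpleGraph V) (n : ℕ) (c : ZMod n → V) : Prop :=
  ∀ p q : ℝ, rdist G n c p q = cdist n p q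

/-- The cycle `c` is `ξ`-almost isometric: `d_Γ(f(p), f(q)) ≥ ξ·|C|/2` for every antipodal
pair of points `p, q` of the cycle. -/
def IsAlmostIsometricCycle (G : SimpleGraph V) (n : ℕ) (c : ZMod n → V) (ξ : ℝ) : Prop :=
  ∀ p q : ℝ, Antipodal n p q → ξ * ((n : ℝ) / 2) ≤ rdist G n c p q

/-- A graph is shortcut if there is a bound `θ` on the lengths of its isometric cycles. -/
def Shortcut (G : SimpleGraph V) : Prop :=
  ∃ θ : ℕ, ∀ (n : ℕ) (c : ZMod n → V), 0 < n → IsCycle G n c → IsIsometricCycle G n c → n ≤ θ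

/-- A graph is strongly shortcut if for some `ξ ∈ (0,1)` there is a bound `θ` on the lengths
of its `ξ`-almost isometric cycles. -/
def StronglyShortcut (G : SimpleGraph V) : Prop :=
  ∃ (θ : ℕ) (ξ : ℝ), 0 < ξ ∧ ξ < 1 ∧
    ∀ (n : ℕ) (c : ZMod n → V), 0 < n → IsCycle G n c → IsAlmostIsometricCycle G n c ξ → n ≤ θ

section Aux

variable {V : Type*}

/-- The four-way routing minimum appearing in `rdist`. -/
def route' (G : SimpleGraph V) (a b u v : V) (s t : ℝ) : ℝ :=
  min (min (s + (G.dist a u : ℝ) + t) (s + (G.dist a v : ℝ) + (1 - t)))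
      (min ((1 - s) + (G.dist b u : ℝ) + t) ((1 - s) + (G.dist b v : ℝ) + (1 - t)))

/-- The abstract form of `rdist`. -/
def edist' (G : SimpleGraph V) (a b u v : V) (s t : ℝ) : ℝ :=
  min (route' G a b u v s t)
    (min (if a = u ∧ b = v then |s - t| else route' G a b u v s t)
         (if a = v ∧ b = u then |s + t - 1| else route' G a b u v s t))

lemma rdist_eq (G : SimpleGraph V) (n : ℕ) (c : ZMod n → V) (p q : ℝ) :
    rdist G n c p q =
      edist' G (c ((⌊p⌋ : ℤ) : ZMod n)) (c (((⌊p⌋ : ℤ) : ZMod n) + 1))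
        (c ((⌊q⌋ : ℤ) : ZMod n)) (c (((⌊q⌋ : ℤ) : ZMod n) + 1)) (Int.fract p) (Int.fract q) :=
  rfl

variable {G : SimpleGraph V} {a b u v w : V} {s t t' : ℝ}

lemma route'_le₁ : route' G a b u v s t ≤ s + (G.dist a u : ℝ) + t :=
  (min_le_left _ _).trans (min_le_left _ _)

lemma route'_le₂ : route' G a b u v s t ≤ s + (G.dist a v : ℝ) + (1 - t) :=
  (min_le_left _ _).trans (min_le_right _ _)

lemma route'_le₃ : route' G a b u v s t ≤ (1 - s) + (G.dist b u : ℝ) + t :=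
  (min_le_right _ _).trans (min_le_left _ _)

lemma route'_le₄ : route' G a b u v s t ≤ (1 - s) + (G.dist b v : ℝ) + (1 - t) :=
  (min_le_right _ _).trans (min_le_right _ _)

lemma edist'_le_route' : edist' G a b u v s t ≤ route' G a b u v s t := min_le_left _ _

lemma edist'_le₁ (h : a = u ∧ b = v) : edist' G a b u v s t ≤ |s - t| := by
  refine (min_le_right _ _).trans ((min_le_left _ _).trans ?_)
  rw [if_pos h]

lemma edist'_le₂ (h : a = v ∧ b = u) : edist' G a b u v s t ≤ |s + t - 1| := by
  refine (min_le_right _ _).trans ((min_le_right _ _).trans ?_)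
  rw [if_pos h]

lemma le_route'_add {Z d : ℝ}
    (h1 : Z ≤ s + (G.dist a u : ℝ) + t + d) (h2 : Z ≤ s + (G.dist a v : ℝ) + (1 - t) + d)
    (h3 : Z ≤ (1 - s) + (G.dist b u : ℝ) + t + d)
    (h4 : Z ≤ (1 - s) + (G.dist b v : ℝ) + (1 - t) + d) :
    Z ≤ route' G a b u v s t + d := by
  unfold route'
  rw [← min_add_add_right, ← min_add_add_right, ← min_add_add_right]
  exact le_min (le_min h1 h2) (le_min h3 h4)

lemma le_edist'_add {Z d : ℝ}
    (h0 : Z ≤ route' G a b u v s t + d)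
    (h1 : a = u ∧ b = v → Z ≤ |s - t| + d)
    (h2 : a = v ∧ b = u → Z ≤ |s + t - 1| + d) :
    Z ≤ edist' G a b u v s t + d := by
  unfold edist'
  rw [← min_add_add_right, ← min_add_add_right]
  refine le_min h0 (le_min ?_ ?_)
  · split_ifs with hh
    · exact h1 hh
    · exact h0
  · split_ifs with hh
    · exact h2 hh
    · exact h0

lemma route'_nonneg (hs0 : 0 ≤ s) (hs1 : s ≤ 1) (ht0 : 0 ≤ t) (ht1 : t ≤ 1) :
    0 ≤ route' G a b u v s t := by
  have d1 : (0:ℝ) ≤ G.dist a u := Nat.cast_nonneg _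
  have d2 : (0:ℝ) ≤ G.dist a v := Nat.cast_nonneg _
  have d3 : (0:ℝ) ≤ G.dist b u := Nat.cast_nonneg _
  have d4 : (0:ℝ) ≤ G.dist b v := Nat.cast_nonneg _
  unfold route'
  refine le_min (le_min ?_ ?_) (le_min ?_ ?_) <;> linarith

lemma edist'_nonneg (hs0 : 0 ≤ s) (hs1 : s ≤ 1) (ht0 : 0 ≤ t) (ht1 : t ≤ 1) :
    0 ≤ edist' G a b u v s t := by
  have hr := route'_nonneg (G := G) (a := a) (b := b) (u := u) (v := v) hs0 hs1 ht0 ht1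
  unfold edist'
  refine le_min hr (le_min ?_ ?_) <;> split_ifs <;> first | exact abs_nonneg _ | exact hr

lemma edist'_lip : edist' G a b u v s t' ≤ edist' G a b u v s t + |t' - t| := by
  have ha1 : t' ≤ t + |t' - t| := by have := le_abs_self (t' - t); linarith
  have ha2 : 1 - t' ≤ (1 - t) + |t' - t| := by have := neg_abs_le (t' - t); linarith
  refine le_edist'_add (le_route'_add ?_ ?_ ?_ ?_) ?_ ?_
  · exact le_trans (edist'_le_route'.trans route'_le₁) (by linarith)
  · exact le_trans (edist'_le_route'.trans route'_le₂) (by linarith)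
  · exact le_trans (edist'_le_route'.trans route'_le₃) (by linarith)
  · exact le_trans (edist'_le_route'.trans route'_le₄) (by linarith)
  · intro hh
    refine (edist'_le₁ hh).trans ?_
    have h := abs_add_le (s - t) (t - t')
    have e : (s - t) + (t - t') = s - t' := by ring
    have e2 : |t - t'| = |t' - t| := abs_sub_comm _ _
    rw [e] at h
    linarith
  · intro hh
    refine (edist'_le₂ hh).trans ?_
    have h := abs_add_le (s + t - 1) (t' - t)
    have e : (s + t - 1) + (t' - t) = s + t' - 1 := by ring
    rw [e] at h
    linarith

lemma edist'_boundary
    (hA : G.dist a v ≤ G.dist a w + 1) (hB : G.dist b v ≤ G.dist b w + 1)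
    (hC : G.dist a v ≤ G.dist a u + 1) (hD : G.dist b v ≤ G.dist b u + 1)
    (hs0 : 0 ≤ s) (hs1 : s ≤ 1) (ht0 : 0 ≤ t) (ht1 : t ≤ 1) :
    edist' G a b v w s 0 ≤ edist' G a b u v s t + (1 - t) ∧
      edist' G a b u v s t ≤ edist' G a b v w s 0 + (1 - t) := by
  have hA' : (G.dist a v : ℝ) ≤ (G.dist a w : ℝ) + 1 := by exact_mod_cast hA
  have hB' : (G.dist b v : ℝ) ≤ (G.dist b w : ℝ) + 1 := by exact_mod_cast hB
  have hC' : (G.dist a v : ℝ) ≤ (G.dist a u : ℝ) + 1 := by exact_mod_cast hC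
  have hD' : (G.dist b v : ℝ) ≤ (G.dist b u : ℝ) + 1 := by exact_mod_cast hD
  constructor
  · have z1 : edist' G a b v w s 0 ≤ s + (G.dist a v : ℝ) + 0 :=
      edist'_le_route'.trans route'_le₁
    have z2 : edist' G a b v w s 0 ≤ (1 - s) + (G.dist b v : ℝ) + 0 :=
      edist'_le_route'.trans route'_le₃
    refine le_edist'_add (le_route'_add ?_ ?_ ?_ ?_) ?_ ?_
    · exact z1.trans (by linarith)
    · exact z1.trans (by linarith)
    · exact z2.trans (by linarith)
    · exact z2.trans (by linarith)
    · rintro ⟨ha, hb⟩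
      have hbv : (G.dist b v : ℝ) = 0 := by rw [hb]; simp
      have habs : t - s ≤ |s - t| := by rw [abs_sub_comm]; exact le_abs_self _
      refine z2.trans ?_
      rw [hbv]; linarith
    · rintro ⟨ha, hb⟩
      have hav : (G.dist a v : ℝ) = 0 := by rw [ha]; simp
      have habs := le_abs_self (s + t - 1)
      refine z1.trans ?_
      rw [hav]; linarith
  · have z2' : edist' G a b u v s t ≤ s + (G.dist a v : ℝ) + (1 - t) :=
      edist'_le_route'.trans route'_le₂
    have z4' : edist' G a b u v s t ≤ (1 - s) + (G.dist b v : ℝ) + (1 - t) :=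
      edist'_le_route'.trans route'_le₄
    refine le_edist'_add (le_route'_add ?_ ?_ ?_ ?_) ?_ ?_
    · exact z2'.trans (by linarith)
    · exact z2'.trans (by linarith)
    · exact z4'.trans (by linarith)
    · exact z4'.trans (by linarith)
    · rintro ⟨ha, hb⟩
      have hav : (G.dist a v : ℝ) = 0 := by rw [ha]; simp
      have habs : s ≤ |s - 0| := by simpa using le_abs_self s
      refine z2'.trans ?_
      rw [hav]; linarith
    · rintro ⟨ha, hb⟩
      have hbv : (G.dist b v : ℝ) = 0 := by rw [hb]; simp
      have habs : 1 - s ≤ |s + 0 - 1| := by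
        rw [show s + 0 - 1 = -(1 - s) by ring, abs_neg]
        exact le_abs_self _
      refine z4'.trans ?_
      rw [hbv]; linarith

lemma dist_le_add_one {x y z : V} (hr : G.Reachable x y) (ha : G.Adj y z) :
    G.dist x z ≤ G.dist x y + 1 := by
  obtain ⟨wlk, hw⟩ := hr.exists_walk_length_eq_dist
  have h := SimpleGraph.dist_le (wlk.concat ha)
  rwa [SimpleGraph.Walk.length_concat, hw] at h

lemma reach {n : ℕ} {c : ZMod n → V} (hn : 0 < n) (hc : IsCycle G n c) (i j : ZMod n) :
    G.Reachable (c i) (c j) := by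
  haveI : NeZero n := ⟨hn.ne'⟩
  have key : ∀ (m : ℕ) (i : ZMod n), G.Reachable (c i) (c (i + (m : ZMod n))) := by
    intro m
    induction m with
    | zero => intro i; simpa using SimpleGraph.Reachable.refl (c i)
    | succ m ih =>
      intro i
      have e : ((m + 1 : ℕ) : ZMod n) = (m : ZMod n) + 1 := by push_cast; ring
      rw [e, ← add_assoc]
      exact (ih i).trans (hc (i + (m : ZMod n))).reachable
  have h := key (j - i).val i
  have e1 : (((j - i).val : ℕ) : ZMod n) = j - i := ZMod.natCast_rightInverse (j - i)
  rw [e1] at h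
  have e2 : i + (j - i) = j := by ring
  rwa [e2] at h

end Aux

section Aux2

variable {V : Type*} {G : SimpleGraph V} {n : ℕ} {c : ZMod n → V}

lemma rdist_self (G : SimpleGraph V) (n : ℕ) (c : ZMod n → V) (p : ℝ) :
    rdist G n c p p = 0 := by
  rw [rdist_eq]
  refine le_antisymm ((edist'_le₁ ⟨rfl, rfl⟩).trans (by simp))
    (edist'_nonneg (Int.fract_nonneg p) (Int.fract_lt_one p).le (Int.fract_nonneg p)
      (Int.fract_lt_one p).le)

lemma rdist_shift (G : SimpleGraph V) (n : ℕ) (c : ZMod n → V) (p q : ℝ) (k : ℤ) :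
    rdist G n c p (q + k * (n : ℝ)) = rdist G n c p q := by
  rw [rdist_eq, rdist_eq]
  have h1 : q + (k : ℝ) * n = q + ((k * n : ℤ) : ℝ) := by push_cast; ring
  rw [h1, Int.floor_add_intCast, Int.fract_add_intCast]
  have h2 : ((⌊q⌋ + k * n : ℤ) : ZMod n) = ((⌊q⌋ : ℤ) : ZMod n) := by
    push_cast
    simp [ZMod.natCast_self]
  rw [h2]

lemma rdist_boundary (hn : 0 < n) (hc : IsCycle G n c) (p q : ℝ) :
    rdist G n c p ((⌊q⌋ + 1 : ℤ) : ℝ) ≤ rdist G n c p q + (1 - Int.fract q) ∧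
      rdist G n c p q ≤ rdist G n c p ((⌊q⌋ + 1 : ℤ) : ℝ) + (1 - Int.fract q) := by
  rw [rdist_eq G n c p ((⌊q⌋ + 1 : ℤ) : ℝ), rdist_eq G n c p q, Int.floor_intCast,
    Int.fract_intCast]
  have h2 : ((⌊q⌋ + 1 : ℤ) : ZMod n) = ((⌊q⌋ : ℤ) : ZMod n) + 1 := by push_cast; ring
  rw [h2]
  set j : ZMod n := ((⌊q⌋ : ℤ) : ZMod n) with hj
  exact edist'_boundary
    (dist_le_add_one (reach hn hc _ _) ((hc (j + 1)).symm))
    (dist_le_add_one (reach hn hc _ _) ((hc (j + 1)).symm))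
    (dist_le_add_one (reach hn hc _ _) (hc j))
    (dist_le_add_one (reach hn hc _ _) (hc j))
    (Int.fract_nonneg p) (Int.fract_lt_one p).le (Int.fract_nonneg q) (Int.fract_lt_one q).le

lemma rdist_lipschitz (hn : 0 < n) (hc : IsCycle G n c) (p q q' : ℝ) :
    rdist G n c p q' ≤ rdist G n c p q + |q' - q| := by
  have key : ∀ m : ℕ, ∀ q q' : ℝ, q ≤ q' → (⌊q'⌋ - ⌊q⌋).toNat = m →
      rdist G n c p q' ≤ rdist G n c p q + (q' - q) ∧
        rdist G n c p q ≤ rdist G n c p q' + (q' - q) := by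
    intro m
    induction m with
    | zero =>
      intro q q' hle hm
      have hff : ⌊q⌋ ≤ ⌊q'⌋ := Int.floor_le_floor hle
      have hfe : ⌊q'⌋ = ⌊q⌋ := by omega
      have hfr : Int.fract q' - Int.fract q = q' - q := by
        simp only [Int.fract, hfe]; ring
      rw [rdist_eq G n c p q, rdist_eq G n c p q', hfe]
      have habs : |Int.fract q' - Int.fract q| = q' - q := by
        rw [hfr]; exact abs_of_nonneg (by linarith)
      have habs' : |Int.fract q - Int.fract q'| = q' - q := by
        rw [abs_sub_comm]; exact habs
      constructor
      · exact le_trans edist'_lip (by rw [habs])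
      · exact le_trans edist'_lip (by rw [habs'])
    | succ m ih =>
      intro q q' hle hm
      have hff : ⌊q⌋ ≤ ⌊q'⌋ := Int.floor_le_floor hle
      have hlt : ⌊q⌋ < ⌊q'⌋ := by omega
      have h2 : ((⌊q⌋ + 1 : ℤ) : ℝ) ≤ q' := by
        have hq1 : ((⌊q⌋ + 1 : ℤ) : ℝ) ≤ ((⌊q'⌋ : ℤ) : ℝ) := by exact_mod_cast (by omega : ⌊q⌋ + 1 ≤ ⌊q'⌋)
        have hq2 := Int.floor_le q'
        linarith
      have h3 : (⌊((⌊q⌋ + 1 : ℤ) : ℝ)⌋) = ⌊q⌋ + 1 := Int.floor_intCast _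
      have hih := ih ((⌊q⌋ + 1 : ℤ) : ℝ) q' h2 (by rw [h3]; omega)
      have hb := rdist_boundary hn hc p q
      have hfr : ((⌊q⌋ + 1 : ℤ) : ℝ) - q = 1 - Int.fract q := by
        simp only [Int.fract]; push_cast; ring
      constructor
      · linarith [hb.1, hb.2, hih.1, hih.2]
      · linarith [hb.1, hb.2, hih.1, hih.2]
  rcases le_total q q' with h | h
  · have hk := key _ q q' h rfl
    have he : |q' - q| = q' - q := abs_of_nonneg (by linarith)
    rw [he]; exact hk.1
  · have hk := key _ q' q h rfl
    have he : |q' - q| = q - q' := by rw [abs_sub_comm]; exact abs_of_nonneg (by linarith)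
    rw [he]; exact hk.2

end Aux2

section Aux3

variable {V : Type*} {G : SimpleGraph V} {n : ℕ} {c : ZMod n → V}

lemma round_err (hn : 0 < n) (x : ℝ) : |x - n * round (x / n)| ≤ n / 2 := by
  have hn' : (0:ℝ) < n := by exact_mod_cast hn
  have h := abs_sub_round (x / n)
  have e : x - n * round (x / n) = n * (x / n - round (x / n)) := by field_simp
  rw [e, abs_mul, abs_of_pos hn']
  nlinarith

lemma cdist_bddBelow (n : ℕ) (p q : ℝ) :
    BddBelow (Set.range fun k : ℤ => |p - q + k * (n : ℝ)|) := by
  refine ⟨0, ?_⟩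
  rintro y ⟨k, rfl⟩
  exact abs_nonneg _

lemma cdist_eq (hn : 0 < n) (p q : ℝ) :
    cdist n p q = |(p - q) - n * round ((p - q) / n)| := by
  have hn' : (0:ℝ) < n := by exact_mod_cast hn
  unfold cdist
  set x := p - q with hx
  set k₀ : ℤ := round (x / n) with hk₀
  apply le_antisymm
  · have h := ciInf_le (cdist_bddBelow n p q) (-k₀)
    refine h.trans (le_of_eq ?_)
    congr 1
    push_cast
    ring
  · apply le_ciInf
    intro k
    by_cases hk : k = -k₀
    · subst hk
      refine le_of_eq ?_
      congr 1
      push_cast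
      ring
    · have h1 : (1:ℝ) ≤ |((k + k₀ : ℤ) : ℝ)| := by
        exact_mod_cast Int.one_le_abs (by omega)
      push_cast at h1
      have h2 : (n:ℝ) ≤ |((k:ℝ) + (k₀:ℝ)) * n| := by
        rw [abs_mul, abs_of_pos hn']
        nlinarith
      have h3 := abs_sub_abs_le_abs_sub (((k:ℝ) + (k₀:ℝ)) * n) (-(x - n * k₀))
      rw [abs_neg, sub_neg_eq_add] at h3
      have e : ((k:ℝ) + (k₀:ℝ)) * n + (x - n * k₀) = x + k * n := by ring
      rw [e] at h3
      have hr := round_err hn x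
      rw [← hk₀] at hr
      linarith

lemma cdist_le_half (hn : 0 < n) (p q : ℝ) : cdist n p q ≤ n / 2 := by
  rw [cdist_eq hn]
  exact round_err hn _

lemma antipodal_sub (hn : 0 < n) (p : ℝ) : Antipodal n p (p - n / 2) := by
  have hn' : (0:ℝ) < n := by exact_mod_cast hn
  unfold Antipodal
  rw [cdist_eq hn]
  have e1 : p - (p - (n:ℝ) / 2) = (n:ℝ) / 2 := by ring
  rw [e1]
  have e2 : ((n:ℝ)/2) / n = 1/2 := by
    rw [div_div, mul_comm, ← div_div, div_self hn'.ne']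
  rw [e2]
  have e3 : round ((1:ℝ)/2) = 1 := by norm_num [round_eq]
  rw [e3]
  rw [show (n:ℝ)/2 - n * ((1 : ℤ) : ℝ) = -((n:ℝ)/2) by push_cast; ring, abs_neg,
    abs_of_pos (by linarith)]

lemma antipodal_add (hn : 0 < n) (p : ℝ) : Antipodal n p (p + n / 2) := by
  have hn' : (0:ℝ) < n := by exact_mod_cast hn
  unfold Antipodal
  rw [cdist_eq hn]
  have e1 : p - (p + (n:ℝ) / 2) = -((n:ℝ) / 2) := by ring
  rw [e1]
  have e2 : (-((n:ℝ)/2)) / n = -(1/2) := by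
    rw [neg_div, div_div, mul_comm, ← div_div, div_self hn'.ne']
  rw [e2]
  have e3 : round (-(1/2) : ℝ) = 0 := by norm_num [round_eq]
  rw [e3]
  rw [show -((n:ℝ)/2) - n * ((0 : ℤ) : ℝ) = -((n:ℝ)/2) by push_cast; ring, abs_neg,
    abs_of_pos (by linarith)]

lemma rdist_le_cdist (hn : 0 < n) (hc : IsCycle G n c) (p q : ℝ) :
    rdist G n c p q ≤ cdist n p q := by
  set k₀ : ℤ := round ((p - q) / n) with hk₀
  have h1 : rdist G n c p q = rdist G n c p (q + k₀ * n) := (rdist_shift G n c p q k₀).symm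
  have h2 := rdist_lipschitz hn hc p p (q + k₀ * n)
  rw [rdist_self] at h2
  have h3 : |q + (k₀:ℝ) * n - p| = |(p - q) - n * k₀| := by
    rw [show q + (k₀:ℝ) * n - p = -((p - q) - n * k₀) from by ring, abs_neg]
  rw [cdist_eq hn, ← hk₀]
  linarith [h2, h3, h1.le, h1.ge]

lemma le_rdist (hn : 0 < n) (hc : IsCycle G n c)
    (h : ∀ p q : ℝ, Antipodal n p q → (n:ℝ)/2 ≤ rdist G n c p q) (p q : ℝ) :
    cdist n p q ≤ rdist G n c p q := by
  have hn' : (0:ℝ) < n := by exact_mod_cast hn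
  have hre := cdist_eq hn p q
  have hr := round_err hn (p - q)
  set k₀ : ℤ := round ((p - q) / n) with hk₀
  have hq₁ : rdist G n c p (q + k₀ * n) = rdist G n c p q := rdist_shift G n c p q k₀
  rw [hre]
  have hub : p - q - (n:ℝ) * k₀ ≤ n/2 := le_of_abs_le hr
  have hlb : -((n:ℝ)/2) ≤ p - q - (n:ℝ) * k₀ := neg_le_of_abs_le hr
  rcases le_or_gt 0 (p - q - (n:ℝ) * k₀) with h0 | h0
  · have ha := h p (p - n/2) (antipodal_sub hn p)
    have hl := rdist_lipschitz hn hc p (q + k₀ * n) (p - n/2)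
    have he : |p - (n:ℝ)/2 - (q + (k₀:ℝ) * n)| = n/2 - (p - q - (n:ℝ) * k₀) := by
      rw [show p - (n:ℝ)/2 - (q + (k₀:ℝ) * n) = -((n:ℝ)/2 - (p - q - (n:ℝ) * k₀)) from by ring,
        abs_neg]
      exact abs_of_nonneg (by linarith)
    rw [hq₁, he] at hl
    have habs : |p - q - (n:ℝ) * k₀| = p - q - (n:ℝ) * k₀ := abs_of_nonneg h0
    rw [show (p - q) - (n:ℝ) * k₀ = p - q - (n:ℝ) * k₀ from by ring, habs]
    linarith
  · have ha := h p (p + n/2) (antipodal_add hn p)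
    have hl := rdist_lipschitz hn hc p (q + k₀ * n) (p + n/2)
    have he : |p + (n:ℝ)/2 - (q + (k₀:ℝ) * n)| = n/2 + (p - q - (n:ℝ) * k₀) := by
      have : p + (n:ℝ)/2 - (q + (k₀:ℝ) * n) = (n:ℝ)/2 + (p - q - (n:ℝ) * k₀) := by ring
      rw [this]
      exact abs_of_nonneg (by linarith)
    rw [hq₁, he] at hl
    have habs : |p - q - (n:ℝ) * k₀| = -(p - q - (n:ℝ) * k₀) := abs_of_neg h0
    rw [show (p - q) - (n:ℝ) * k₀ = p - q - (n:ℝ) * k₀ from by ring, habs]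
    linarith

end Aux3

/-- Corollary `isomisomemb`.  Let `Γ` be a graph and let `f : C → Γ` be a
cycle.  Then `f` is an isometric embedding if and only if `d_Γ(f(p), f(q)) ≥ |C|/2` for every
antipodal pair of points `p, q ∈ C`. -/
theorem cor_isomisomemb {V : Type*} (G : SimpleGraph V) (n : ℕ) (hn : 0 < n)
    (c : ZMod n → V) (hc : IsCycle G n c) :
    IsIsometricCycle G n c ↔
      (∀ p q : ℝ, Antipodal n p q → (n : ℝ) / 2 ≤ rdist G n c p q) := by
  constructor
  · intro h p q hpq
    rw [h p q]
    unfold Antipodal at hpq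
    rw [hpq]
  · intro h p q
    exact le_antisymm (rdist_le_cdist hn hc p q) (le_rdist hn hc h p q)

end ShortcutGraphs
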